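/- Let S be a list of length n over a linearly ordered type α in which some character occurs exactly once, and let M be the list of the n rotations sorted in increasing lexicographic order, rows indexed 1,…,n; let L i be the last character of row M[i], C(c) the number of positions of S holding a character strictly smaller than c, and Occ(c,i) the number of indices j with 1 ≤ j ≤ i and L j = c. Let W be a list over α with |W| < n, let c be a character, and suppose first ≤ last are such that { i : 1 ≤ i ≤ n and W is a prefix of M[i] } = { first, first+1, …, last }. Then { i : 1 ≤ i ≤ n and c :: W is a prefix of M[i] } = { C(c) + Occ(c, first−1) + 1, …, C(c) + Occ(c, last) } (this set being empty when C(c) + Occ(c, first−1) + 1 > C(c) + Occ(c, last)). -/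

import Mathlib

/-!
In a strictly sorted list the index of an entry is the number of entries below it. Below a row
`c :: t` of the sorted rotation matrix lie the `C c` rows starting with a smaller character and
the rows `c :: t'` with `t' < t`; rotating every row by one place, the latter correspond to the
rows `t' ++ [c]` below `t ++ [c]`, i.e. to the occurrences of `c` in the last column above the
row `t ++ [c]`. So if the row `t ++ [c]` has (0-based) index `y`, its rotation `c :: t` has index
`C c + Occ c y` (the LF-mapping). The rows prefixed by `c :: W` are thus the rotations of the rows
with index in `[first - 1, last)` that end with `c`, and since `Occ c` grows by one exactly at
those rows, their indices fill `[C c + Occ c (first - 1), C c + Occ c last)`.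
-/

def rot {α : Type*} (i : ℕ) (S : List α) : List α := S.drop i ++ S.take i

namespace List

section SortedRank

variable {β : Type*} [Preorder β] [DecidableLT β] {M : List β}

theorem countP_take_eq_countP_and_lt_getElem (hM : M.Pairwise (· < ·)) (p : β → Bool)
    {x : ℕ} (hx : x < M.length) :
    (M.take x).countP p = M.countP (fun r => p r && r < M[x]) := by
  have hsplit := hM
  rw [← take_append_drop x M, pairwise_append, drop_eq_getElem_cons hx, pairwise_cons] at hsplit
  obtain ⟨-, ⟨hlater, -⟩, hbefore⟩ := hsplit
  have hsplitM : M = M.take x ++ M[x] :: M.drop (x + 1) := by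
    rw [← drop_eq_getElem_cons hx, take_append_drop]
  have htake : (M.take x).countP (fun r => p r && r < M[x]) = (M.take x).countP p :=
    countP_congr fun r hr => by simp [hbefore r hr _ mem_cons_self]
  have hdrop : (M.drop (x + 1)).countP (fun r => p r && r < M[x]) = 0 :=
    countP_eq_zero.mpr fun r hr => by simp [(hlater r hr).not_gt]
  rw [congrArg (countP _) hsplitM, countP_append, countP_cons, htake, hdrop]
  simp

theorem countP_lt_getElem (hM : M.Pairwise (· < ·)) {x : ℕ} (hx : x < M.length) :
    M.countP (· < M[x]) = x := by
  simpa [hx.le] using (countP_take_eq_countP_and_lt_getElem hM (fun _ => true) hx).symm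

end SortedRank

section CountTake

variable {β : Type*} [DecidableEq β] {l : List β} {c : β}

theorem count_take_lt_count_take {y t : ℕ} (hy : y < l.length) (hyc : l[y] = c) (hyt : y < t) :
    (l.take y).count c < (l.take t).count c := by
  subst hyc
  calc (l.take y).count l[y] < (l.take (y + 1)).count l[y] := by
        rw [count_getElem_take_succ]; omega
    _ ≤ (l.take t).count l[y] := (take_sublist_take_left hyt).count_le _

theorem count_take_add_one (l : List β) (c : β) (y : ℕ) :
    (l.take (y + 1)).count c = (l.take y).count c + if l[y]? = some c then 1 else 0 := by
  rw [take_add_one, count_append]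
  cases l[y]? <;> simp [count_singleton]

theorem exists_getElem_eq_and_count_take_eq_of_le_of_lt {a b k : ℕ}
    (hak : (l.take a).count c ≤ k) (hkb : k < (l.take b).count c) :
    ∃ y, ∃ hy : y < l.length, l[y] = c ∧ a ≤ y ∧ y < b ∧ (l.take y).count c = k := by
  induction b with
  | zero => simp at hkb
  | succ b ih =>
    by_cases hk : k < (l.take b).count c
    · obtain ⟨y, hy, hyc, hay, hyb, hyk⟩ := ih hk
      exact ⟨y, hy, hyc, hay, by omega, hyk⟩
    have hstep := count_take_add_one l c b
    split_ifs at hstep with hbc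
    · obtain ⟨hb, hbc⟩ := getElem?_eq_some_iff.1 hbc
      refine ⟨b, hb, hbc, ?_, by omega, by omega⟩
      by_contra hab
      have := (take_sublist_take_left (l := l) (show b + 1 ≤ a by omega)).count_le c
      omega
    · omega

theorem exists_getElem_eq_and_count_take_eq_iff {a b k : ℕ} :
    (∃ y, ∃ hy : y < l.length, l[y] = c ∧ a ≤ y ∧ y < b ∧ (l.take y).count c = k) ↔
      (l.take a).count c ≤ k ∧ k < (l.take b).count c := by
  refine ⟨?_, fun h => exists_getElem_eq_and_count_take_eq_of_le_of_lt h.1 h.2⟩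
  rintro ⟨y, hy, hyc, hay, hyb, rfl⟩
  exact ⟨(take_sublist_take_left hay).count_le c, count_take_lt_count_take hy hyc hyb⟩

end CountTake

theorem countP_or_eq_add_of_disjoint {β : Type*} {l : List β} {p q : β → Prop}
    [DecidablePred p] [DecidablePred q] (h : ∀ x ∈ l, ¬(p x ∧ q x)) :
    l.countP (fun x => p x ∨ q x) = l.countP (p ·) + l.countP (q ·) := by
  induction l with
  | nil => rfl
  | cons a l ih =>
    simp only [countP_cons, ih fun x hx => h x (mem_cons_of_mem _ hx)]
    have := h a mem_cons_self
    by_cases hp : p a <;> by_cases hq : q a <;> simp_all <;> omega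

section Lex

variable {α : Type*} [LinearOrder α]

theorem append_lt_append_right_iff_of_length_eq {u v : List α} (s : List α)
    (h : u.length = v.length) : u ++ s < v ++ s ↔ u < v := by
  induction u generalizing v with
  | nil =>
    obtain rfl := eq_nil_of_length_eq_zero h.symm
    simp
  | cons a u ih =>
    obtain ⟨b, v, rfl⟩ := exists_cons_of_length_eq_add_one h.symm
    simp only [cons_append, cons_lt_cons_iff, ih (Nat.succ.inj h)]

end Lex

theorem getLast!_concat {α : Type*} [Inhabited α] (u : List α) (a : α) :
    (u ++ [a]).getLast! = a := by
  simp

section Rotations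

variable {α : Type*}

theorem perm_map_rotate_cyclicPermutations (l : List α) (k : ℕ) :
    l.cyclicPermutations.map (·.rotate k) ~ l.cyclicPermutations := by
  suffices l.cyclicPermutations.map (·.rotate k) = (l.rotate k).cyclicPermutations by
    rw [this, cyclicPermutations_rotate]
    exact rotate_perm _ _
  rcases eq_or_ne l [] with rfl | hl
  · simp
  refine ext_getElem (by simp [hl]) fun i _ _ => ?_
  simp [rotate_rotate, Nat.add_comm, hl, rotate_mod]

theorem map_head!_cyclicPermutations [Inhabited α] {l : List α} (hl : l ≠ []) :
    l.cyclicPermutations.map head! = l := by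
  refine ext_getElem (by simp [hl]) fun i _ hi => ?_
  simp only [getElem_map, getElem_cyclicPermutations]
  exact head!_of_head? ((head?_rotate hi).trans (getElem?_eq_getElem hi))

end Rotations

end List

open List

theorem map_rot_range_eq_cyclicPermutations {α : Type*} {S : List α} (hS : S ≠ []) :
    (range S.length).map (fun i => rot i S) = S.cyclicPermutations :=
  ext_getElem (by simp [hS]) fun i hi _ => by
    simp only [getElem_map, getElem_range, getElem_cyclicPermutations, rot]
    exact (rotate_eq_drop_append_take (by simp at hi; omega)).symm

namespace BurrowsWheeler

variable {α : Type*} {S : List α} {M : List (List α)}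

def C [LT α] [DecidableLT α] (S : List α) (c : α) : ℕ := (S.filter (· < c)).length

def Occ [Inhabited α] [DecidableEq α] (M : List (List α)) (c : α) (i : ℕ) : ℕ :=
  ((M.map (·.getLast!)).take i).count c

theorem mem_iff_isRotated (hM : M ~ S.cyclicPermutations) {r : List α} : r ∈ M ↔ r ~r S :=
  hM.mem_iff.trans mem_cyclicPermutations_iff

theorem length_eq_of_mem (hM : M ~ S.cyclicPermutations) {r : List α} (hr : r ∈ M) :
    r.length = S.length :=
  ((mem_iff_isRotated hM).1 hr).perm.length_eq

theorem exists_eq_concat_of_mem (hM : M ~ S.cyclicPermutations) (hS : S ≠ []) {r : List α}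
    (hr : r ∈ M) : ∃ u a, r = u ++ [a] ∧ u.length = S.length - 1 := by
  have hlen := length_eq_of_mem hM hr
  rcases eq_nil_or_concat' r with rfl | ⟨u, a, rfl⟩
  · simp [eq_comm, hS] at hlen
  · exact ⟨u, a, rfl, by simp at hlen; omega⟩

theorem countP_rotate (hM : M ~ S.cyclicPermutations) (p : List α → Bool) (k : ℕ) :
    M.countP (fun r => p (r.rotate k)) = M.countP p := by
  rw [← Function.comp_def, ← countP_map,
    ((hM.map _).trans ((perm_map_rotate_cyclicPermutations S k).trans hM.symm)).countP_eq]

variable [LinearOrder α] [Inhabited α]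

theorem countP_head!_lt (hM : M ~ S.cyclicPermutations) (hS : S ≠ []) (c : α) :
    M.countP (·.head! < c) = C S c := by
  rw [hM.countP_eq, C, ← countP_eq_length_filter]
  conv_rhs => rw [← map_head!_cyclicPermutations hS, countP_map]
  rfl

theorem countP_lt_cons (hM : M ~ S.cyclicPermutations) (hS : S ≠ []) (c : α) (t : List α) :
    M.countP (· < c :: t) = C S c + M.countP (fun r => r.head! = c ∧ r.tail < t) := by
  rw [← countP_head!_lt hM hS c,
    ← countP_or_eq_add_of_disjoint (p := fun r : List α => r.head! < c)]
  · refine countP_congr fun r hr => ?_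
    obtain ⟨u, a, rfl, -⟩ := exists_eq_concat_of_mem hM hS hr
    rw [decide_eq_true_iff, decide_eq_true_iff]
    rcases u with _ | ⟨b, u⟩ <;> exact cons_lt_cons_iff
  · intro r _ h
    exact h.1.ne h.2.1

theorem countP_lt_cons_dropLast (hM : M ~ S.cyclicPermutations)
    (hsorted : M.Pairwise (· < ·)) (hS : S ≠ []) {c : α} {y : ℕ} (hy : y < M.length)
    (hc : M[y].getLast! = c) :
    M.countP (· < c :: M[y].dropLast) = C S c + Occ M c y := by
  obtain ⟨v, b, hv, hvlen⟩ := exists_eq_concat_of_mem hM hS (getElem_mem hy)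
  rw [countP_lt_cons hM hS]
  congr 1
  calc M.countP (fun r => r.head! = c ∧ r.tail < M[y].dropLast)
      = M.countP (fun r => (r.rotate (S.length - 1)).head! = c ∧
          (r.rotate (S.length - 1)).tail < M[y].dropLast) :=
        (countP_rotate hM (fun r => r.head! = c ∧ r.tail < M[y].dropLast) _).symm
    _ = M.countP (fun r => r.getLast! = c && r < M[y]) := by
        refine countP_congr fun r hr => ?_
        obtain ⟨u, a, rfl, hulen⟩ := exists_eq_concat_of_mem hM hS hr
        rw [hv] at hc ⊢
        simp only [getLast!_concat] at hc
        subst hc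
        rw [← hulen, rotate_append_length_eq]
        simp only [getLast!_concat, dropLast_concat, singleton_append, head!_cons, tail_cons,
          Bool.decide_and, decide_eq_true_iff, Bool.and_eq_true]
        refine and_congr_right fun hab => ?_
        rw [hab, append_lt_append_right_iff_of_length_eq _ (hulen.trans hvlen.symm)]
    _ = (M.take y).countP (fun r => r.getLast! = c) :=
        (countP_take_eq_countP_and_lt_getElem hsorted _ hy).symm
    _ = Occ M c y := by
        rw [Occ, ← map_take, count_eq_countP, countP_map]
        rfl

theorem exists_getElem_eq_cons_dropLast (hM : M ~ S.cyclicPermutations)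
    (hsorted : M.Pairwise (· < ·)) (hS : S ≠ []) {c : α} {y : ℕ} (hy : y < M.length)
    (hc : M[y].getLast! = c) :
    ∃ hx : C S c + Occ M c y < M.length, M[C S c + Occ M c y] = c :: M[y].dropLast := by
  obtain ⟨v, b, hv, -⟩ := exists_eq_concat_of_mem hM hS (getElem_mem hy)
  have hrot : c :: M[y].dropLast ~r M[y] := by
    rw [hv] at hc ⊢
    simp only [getLast!_concat] at hc
    rw [hc, dropLast_concat]
    exact (isRotated_concat c v).symm
  have hmem : c :: M[y].dropLast ∈ M :=
    (mem_iff_isRotated hM).2 (hrot.trans ((mem_iff_isRotated hM).1 (getElem_mem hy)))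
  obtain ⟨x, hx, hxeq⟩ := getElem_of_mem hmem
  have hrank := countP_lt_getElem hsorted hx
  rw [hxeq, countP_lt_cons_dropLast hM hsorted hS hy hc] at hrank
  subst hrank
  exact ⟨hx, hxeq⟩

theorem exists_getElem_eq_concat_of_getElem_eq_cons (hM : M ~ S.cyclicPermutations)
    (hsorted : M.Pairwise (· < ·)) (hS : S ≠ []) {c : α} {t : List α} {x : ℕ}
    (hx : x < M.length) (hxt : M[x] = c :: t) :
    ∃ y, ∃ hy : y < M.length, M[y] = t ++ [c] ∧ C S c + Occ M c y = x := by
  have hrot : M[x] ~r S := (mem_iff_isRotated hM).1 (getElem_mem hx)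
  rw [hxt] at hrot
  have hmem : t ++ [c] ∈ M := (mem_iff_isRotated hM).2 ((isRotated_concat c t).trans hrot)
  obtain ⟨y, hy, hyeq⟩ := getElem_of_mem hmem
  have hyc : M[y].getLast! = c := by simp [hyeq]
  refine ⟨y, hy, hyeq, ?_⟩
  rw [← countP_lt_cons_dropLast hM hsorted hS hy hyc, hyeq, dropLast_concat, ← hxt,
    countP_lt_getElem hsorted hx]

theorem exists_cons_prefix_getElem_iff (hM : M ~ S.cyclicPermutations)
    (hsorted : M.Pairwise (· < ·)) (hS : S ≠ []) {W : List α} (hW : W.length < S.length)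
    (c : α) {a b : ℕ} (hWab : ∀ y (hy : y < M.length), W <+: M[y] ↔ a ≤ y ∧ y < b)
    (x : ℕ) :
    (∃ hx : x < M.length, c :: W <+: M[x]) ↔
      C S c + Occ M c a ≤ x ∧ x < C S c + Occ M c b := by
  constructor
  · rintro ⟨hx, u, hu⟩
    obtain ⟨y, hy, hyeq, rfl⟩ :=
      exists_getElem_eq_concat_of_getElem_eq_cons hM hsorted hS hx hu.symm
    have hWy : W <+: M[y] := by
      rw [hyeq]
      exact ⟨u ++ [c], by simp [append_eq]⟩
    obtain ⟨hay, hyb⟩ := (hWab y hy).1 hWy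
    have hOcc : Occ M c a ≤ Occ M c y ∧ Occ M c y < Occ M c b :=
      exists_getElem_eq_and_count_take_eq_iff.1
        ⟨y, by simpa using hy, by simp [hyeq], hay, hyb, rfl⟩
    omega
  · rintro ⟨hax, hxb⟩
    obtain ⟨y, hy, hyc, hay, hyb, hyk⟩ := exists_getElem_eq_and_count_take_eq_iff.2
      (show Occ M c a ≤ x - C S c ∧ x - C S c < Occ M c b by omega)
    rw [length_map] at hy
    rw [getElem_map] at hyc
    obtain ⟨hx, hxeq⟩ := exists_getElem_eq_cons_dropLast hM hsorted hS hy hyc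
    obtain rfl : C S c + Occ M c y = x := by
      change Occ M c y = x - C S c at hyk
      omega
    refine ⟨hx, hxeq ▸ cons_prefix_cons.2 ⟨rfl, ?_⟩⟩
    rw [dropLast_eq_take, prefix_take_iff, length_eq_of_mem hM (getElem_mem hy)]
    exact ⟨(hWab y hy).2 ⟨hay, hyb⟩, by omega⟩

end BurrowsWheeler

theorem stmt8_general {α : Type*} [LinearOrder α] [Inhabited α] (S : List α)
    (M : List (List α))
    (hperm : List.Perm M ((List.range S.length).map (fun i => rot i S)))
    (hsorted : M.Pairwise (List.Lex (· < ·)))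
    (W : List α) (hW : W.length < S.length) (c : α)
    (first last : ℕ)
    (hset : {i : ℕ | 1 ≤ i ∧ i ≤ S.length ∧ W <+: M.getD (i - 1) []} =
      Set.Icc first last) :
    {i : ℕ | 1 ≤ i ∧ i ≤ S.length ∧ (c :: W) <+: M.getD (i - 1) []} =
      Set.Icc
        ((S.filter (fun a => a < c)).length +
          ((M.map (fun r => r.getLast!)).take (first - 1)).count c + 1)
        ((S.filter (fun a => a < c)).length +
          ((M.map (fun r => r.getLast!)).take last).count c) := by
  have hS : S ≠ [] := by
    rintro rfl
    simp at hW
  have hM : M ~ S.cyclicPermutations := map_rot_range_eq_cyclicPermutations hS ▸ hperm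
  have hMlen : M.length = S.length := by
    rw [hM.length_eq, length_cyclicPermutations_of_ne_nil S hS]
  have hWrows : ∀ y (hy : y < M.length), W <+: M[y] ↔ first - 1 ≤ y ∧ y < last := by
    intro y hy
    have := Set.ext_iff.mp hset (y + 1)
    simpa [← hMlen, hy, Nat.sub_le_iff_le_add] using this
  ext i
  rcases i with _ | x
  · simp
  have hrow : (x + 1 ≤ S.length ∧ c :: W <+: M.getD x []) ↔
      ∃ hx : x < M.length, c :: W <+: M[x] := by
    rw [← hMlen, Nat.add_one_le_iff]
    exact ⟨fun ⟨hx, h⟩ => ⟨hx, by rwa [getD_eq_getElem] at h⟩,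
      fun ⟨hx, h⟩ => ⟨hx, by rwa [getD_eq_getElem]⟩⟩
  simp only [Set.mem_ofPred_eq, Set.mem_Icc, Nat.add_sub_cancel, le_add_iff_nonneg_left, zero_le,
    true_and, hrow, BurrowsWheeler.exists_cons_prefix_getElem_iff hM hsorted hS hW c hWrows x,
    BurrowsWheeler.C, BurrowsWheeler.Occ]
  omega

/-- **Invariant of one phase of the FM-index backward search (`get_rows`).**
Let `S` be a list of length `n` in which some character occurs exactly once, and let `M` be
the list of the `n` rotations of `S` sorted in increasing lexicographic order, rows indexed
`1, …, n` (so row `i` is `M.getD (i-1) []`).  Let `L i` be the last character of row `i`,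
`C c = (S.filter (· < c)).length` the number of positions of `S` holding a character
strictly smaller than `c` and `Occ c i` the number of rows among the first `i` whose last
character is `c`.  Let `W` be a list with `W.length < n`, `c` a character, and suppose
`first ≤ last` are such that the set of row indices `i` (with `1 ≤ i ≤ n`) whose row is
prefixed by `W` is exactly `{first, …, last}`.  Then the set of row indices whose row is
prefixed by `c :: W` is exactly `{C c + Occ c (first-1) + 1, …, C c + Occ c last}`
(empty when the left endpoint exceeds the right one). -/
theorem stmt8 {α : Type*} [LinearOrder α] [Inhabited α] (S : List α)
    (hone : ∃ c, S.count c = 1)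
    (M : List (List α))
    (hperm : List.Perm M ((List.range S.length).map (fun i => rot i S)))
    (hsorted : M.Pairwise (List.Lex (· < ·)))
    (W : List α) (hW : W.length < S.length) (c : α)
    (first last : ℕ) (hfl : first ≤ last)
    (hset : {i : ℕ | 1 ≤ i ∧ i ≤ S.length ∧ W <+: M.getD (i - 1) []} =
      Set.Icc first last) :
    {i : ℕ | 1 ≤ i ∧ i ≤ S.length ∧ (c :: W) <+: M.getD (i - 1) []} =
      Set.Icc
        ((S.filter (fun a => a < c)).length +
          ((M.map (fun r => r.getLast!)).take (first - 1)).count c + 1)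
        ((S.filter (fun a => a < c)).length +
          ((M.map (fun r => r.getLast!)).take last).count c) :=
  stmt8_general S M hperm hsorted W hW c first last hset
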